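/- arXiv:2605.26652 — 3 statements merged into one kernel-verified Lean document; each statement's English description precedes it below -/
import Mathlib

section
/- Define Ψ_K(a,b) := ∫₀¹ (p·(b ∧ K) - (1-p)·(a ∧ K))·((1-p)a - pb) dp for a,b ≥ 0 and K > 0. If X, Y are independent exponential random variables each with mean ρ > 0, then E[Ψ_K(X,Y)] = (ρ·m₁^K(ρ))/3 - (2/3)·m_{1,1}^K(ρ), where m₁^K(ρ) = E[X ∧ K] and m_{1,1}^K(ρ) = E[X·(X ∧ K)]. -/
/-!
Integrating out `p` turns `Ψ_K(x, y)` into `(x (y ∧ K) + y (x ∧ K)) / 6 - (x (x ∧ K) + y (y ∧ K)) / 3`,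
a sum of products of a function of `x` and a function of `y`. Against a product weight the double
integral therefore factors into one-dimensional moments, and for the exponential density of mean
`ρ` the moments that remain to be evaluated are just the mass `1` and the mean `ρ`.
-/

open MeasureTheory Real Set

theorem integral_drift_eq (A B x y : ℝ) :
    ∫ p in (0:ℝ)..1, (p * A - (1 - p) * B) * ((1 - p) * x - p * y)
      = (A * x + B * y) / 6 - (A * y + B * x) / 3 := by
  have hpoly : ∀ p : ℝ, (p * A - (1 - p) * B) * ((1 - p) * x - p * y)
      = -(B * x) + (A * x + 2 * B * x + B * y) * p ^ 1
        - (A * x + A * y + B * x + B * y) * p ^ 2 := by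
    intro p; ring
  have hmonomial : ∀ (c : ℝ) (n : ℕ), IntervalIntegrable (fun p : ℝ => c * p ^ n) volume 0 1 :=
    fun c n => (continuous_const.mul (continuous_pow n)).intervalIntegrable _ _
  simp_rw [hpoly]
  rw [intervalIntegral.integral_sub (intervalIntegrable_const.add (hmonomial _ 1)) (hmonomial _ 2),
    intervalIntegral.integral_add intervalIntegrable_const (hmonomial _ 1)]
  simp only [intervalIntegral.integral_const, intervalIntegral.integral_const_mul, integral_pow]
  norm_num
  ring

theorem integral_integral_sum_mul {ι α β 𝕜 : Type*} [RCLike 𝕜] [MeasurableSpace α]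
    [MeasurableSpace β] {μ : Measure α} {ν : Measure β} (s : Finset ι) {f : ι → α → 𝕜}
    {g : ι → β → 𝕜} (hf : ∀ i ∈ s, Integrable (f i) μ) (hg : ∀ i ∈ s, Integrable (g i) ν) :
    ∫ x, ∫ y, ∑ i ∈ s, f i x * g i y ∂ν ∂μ = ∑ i ∈ s, (∫ x, f i x ∂μ) * ∫ y, g i y ∂ν := by
  have hinner : ∀ x, ∫ y, ∑ i ∈ s, f i x * g i y ∂ν = ∑ i ∈ s, f i x * ∫ y, g i y ∂ν := by
    intro x
    rw [integral_finsetSum s fun i hi => (hg i hi).const_mul _]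
    simp only [integral_const_mul]
  simp_rw [hinner]
  rw [integral_finsetSum s fun i hi => (hf i hi).mul_const _]
  simp only [integral_mul_const]

theorem integral_integral_drift_mul_mul {μ : Measure ℝ} {K : ℝ} {w : ℝ → ℝ}
    (hw : Integrable w μ) (hxw : Integrable (fun x => x * w x) μ)
    (hmw : Integrable (fun x => min x K * w x) μ)
    (hxmw : Integrable (fun x => x * min x K * w x) μ) :
    ∫ x, ∫ y, (∫ p in (0:ℝ)..1, (p * min y K - (1 - p) * min x K) * ((1 - p) * x - p * y))
        * w x * w y ∂μ ∂μ
      = (∫ x, x * w x ∂μ) * (∫ x, min x K * w x ∂μ) / 3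
        - (2 / 3) * (∫ x, w x ∂μ) * ∫ x, x * min x K * w x ∂μ := by
  let F : Fin 4 → ℝ → ℝ := ![fun x => x * w x / 6, fun x => min x K * w x / 6,
    fun x => -(w x / 3), fun x => -(x * min x K * w x / 3)]
  let G : Fin 4 → ℝ → ℝ := ![fun y => min y K * w y, fun y => y * w y,
    fun y => y * min y K * w y, w]
  have hsplit : ∀ x y,
      (∫ p in (0:ℝ)..1, (p * min y K - (1 - p) * min x K) * ((1 - p) * x - p * y)) * w x * w y
        = ∑ i, F i x * G i y := by
    intro x y
    rw [integral_drift_eq, Fin.sum_univ_four]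
    simp only [F, G, Matrix.cons_val]
    ring
  simp_rw [hsplit]
  rw [integral_integral_sum_mul]
  · simp only [F, G, Fin.sum_univ_four, Matrix.cons_val, integral_div, integral_neg]
    ring
  · intro i _
    fin_cases i
    exacts [hxw.div_const 6, hmw.div_const 6, (hw.div_const 3).neg, (hxmw.div_const 3).neg]
  · intro i _
    fin_cases i <;> assumption

theorem integrableOn_Ioi_min_mul {K : ℝ} {g : ℝ → ℝ} (hK : 0 ≤ K) (hg : IntegrableOn g (Ioi 0)) :
    IntegrableOn (fun x => min x K * g x) (Ioi 0) := by
  refine hg.bdd_mul (c := K) (by fun_prop) ?_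
  filter_upwards [ae_restrict_mem measurableSet_Ioi] with x hx
  rw [Real.norm_eq_abs, abs_of_nonneg (le_min (le_of_lt hx) hK)]
  exact min_le_right _ _

section ExponentialMoments

variable {ρ : ℝ}

theorem integrableOn_Ioi_pow_mul_expDensity (hρ : 0 < ρ) (n : ℕ) :
    IntegrableOn (fun x => x ^ n * (ρ⁻¹ * exp (-x / ρ))) (Ioi 0) := by
  have h := (integrableOn_rpow_mul_exp_neg_mul_rpow (s := n) (p := 1) (b := ρ⁻¹)
    (by linarith [n.cast_nonneg (α := ℝ)]) one_pos (inv_pos.2 hρ)).const_mul ρ⁻¹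
  refine IntegrableOn.congr_fun h (fun x _ => ?_) measurableSet_Ioi
  simp only [rpow_natCast, rpow_one]
  rw [neg_div, div_eq_inv_mul, neg_mul]
  ring

theorem integral_Ioi_pow_mul_expDensity (hρ : 0 < ρ) (n : ℕ) :
    ∫ x in Ioi 0, x ^ n * (ρ⁻¹ * exp (-x / ρ)) = n.factorial * ρ ^ n := by
  have hGamma := integral_rpow_mul_exp_neg_mul_Ioi (a := n + 1) (by positivity) (inv_pos.2 hρ)
  simp only [add_sub_cancel_right, rpow_natCast, one_div, inv_inv, Gamma_nat_eq_factorial]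
    at hGamma
  rw [← Nat.cast_add_one, rpow_natCast] at hGamma
  have hrescale : ∀ x, x ^ n * (ρ⁻¹ * exp (-x / ρ)) = ρ⁻¹ * (x ^ n * exp (-(ρ⁻¹ * x))) := by
    intro x; rw [neg_div, div_eq_inv_mul]; ring
  simp_rw [hrescale]
  rw [integral_const_mul, hGamma, pow_succ]
  field_simp

end ExponentialMoments

/-- The local-equilibrium average of the drift local function `Ψ_K`:
if `X, Y` are i.i.d. exponential with mean `ρ` (density `ρ⁻¹e^{-x/ρ}` on `(0,∞)`), then
`E[Ψ_K(X,Y)] = ρ·m₁^K(ρ)/3 - (2/3)·m_{1,1}^K(ρ)`. -/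
theorem average_drift_local_function (ρ K : ℝ) (hρ : 0 < ρ) (hK : 0 < K) :
    (∫ x in Set.Ioi (0:ℝ), ∫ y in Set.Ioi (0:ℝ),
        (∫ p in (0:ℝ)..1, (p * min y K - (1 - p) * min x K) * ((1 - p) * x - p * y))
          * (ρ⁻¹ * Real.exp (-x / ρ)) * (ρ⁻¹ * Real.exp (-y / ρ)))
      = ρ * (∫ x in Set.Ioi (0:ℝ), min x K * (ρ⁻¹ * Real.exp (-x / ρ))) / 3
        - (2 / 3) * (∫ x in Set.Ioi (0:ℝ), x * min x K * (ρ⁻¹ * Real.exp (-x / ρ))) := by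
  have hw : IntegrableOn (fun x => ρ⁻¹ * exp (-x / ρ)) (Ioi 0) := by
    simpa using integrableOn_Ioi_pow_mul_expDensity hρ 0
  have hxw : IntegrableOn (fun x => x * (ρ⁻¹ * exp (-x / ρ))) (Ioi 0) := by
    simpa using integrableOn_Ioi_pow_mul_expDensity hρ 1
  have hxmw : IntegrableOn (fun x => x * min x K * (ρ⁻¹ * exp (-x / ρ))) (Ioi 0) :=
    (integrableOn_Ioi_min_mul hK.le hxw).congr_fun (fun x _ => by ring) measurableSet_Ioi
  have hmass : ∫ x in Ioi 0, ρ⁻¹ * exp (-x / ρ) = 1 := by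
    simpa using integral_Ioi_pow_mul_expDensity hρ 0
  have hmean : ∫ x in Ioi 0, x * (ρ⁻¹ * exp (-x / ρ)) = ρ := by
    simpa using integral_Ioi_pow_mul_expDensity hρ 1
  rw [integral_integral_drift_mul_mul hw hxw (integrableOn_Ioi_min_mul hK.le hw) hxmw,
    hmass, hmean]
  ring
end

section
/- Let ρ : ℝ^d → [0,∞) be smooth with support contained in the ball of radius 1/2, ∫ρ = 1, and assume ∫_{ℝ^d} |∇ρ(x)|²/ρ(x)^{1+θ} dx =: C_θ < ∞ for a fixed θ ∈ (0,1). For σ ∈ (0,1/2] define ρ_σ(x) := σ^{-d} ρ(x/σ). Then for all ε > 0 and σ ∈ (0,1/2), ∫_{ℝ^d} [ε ρ_σ(x)/(1 + ε ρ_σ(x))]·|∇ log ρ_σ(x)|² dx ≤ C_θ · ε^{1-θ} · σ^{dθ - 2}, where ∇log ρ_σ is interpreted as ∇ρ_σ/ρ_σ on {ρ_σ > 0} and the integrand is 0 where ρ_σ = 0. -/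
open MeasureTheory Real

/-- The rescaled mollifier `ρ_σ(x) = σ^{-d} ρ(x/σ)`. -/
noncomputable def mollifierRescaled (d : ℕ) (ρ : EuclideanSpace ℝ (Fin d) → ℝ) (σ : ℝ) :
    EuclideanSpace ℝ (Fin d) → ℝ :=
  fun x => (σ ^ d)⁻¹ * ρ (σ⁻¹ • x)

/-- Norm of the gradient equals norm of the Fréchet derivative. -/
lemma norm_gradient_eq_norm_fderiv {F : Type*} [NormedAddCommGroup F] [InnerProductSpace ℝ F]
    [CompleteSpace F] (f : F → ℝ) (x : F) : ‖gradient f x‖ = ‖fderiv ℝ f x‖ := by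
  rw [gradient]
  exact (InnerProductSpace.toDual ℝ F).symm.norm_map _

/-- Pointwise bound `t/(1+t) ≤ t^{1-θ}` for `t ≥ 0`, `θ ∈ (0,1)`. -/
lemma div_one_add_le_rpow {t θ : ℝ} (ht : 0 ≤ t) (hθ0 : 0 < θ) (hθ1 : θ < 1) :
    t / (1 + t) ≤ t ^ (1 - θ) := by
  rcases eq_or_lt_of_le ht with h | h
  · simp [← h, Real.zero_rpow (by linarith : (1:ℝ) - θ ≠ 0)]
  rcases le_or_gt t 1 with h1 | h1
  · calc t / (1 + t) ≤ t := div_le_self ht (by linarith)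
    _ = t ^ (1:ℝ) := (Real.rpow_one t).symm
    _ ≤ t ^ (1 - θ) := Real.rpow_le_rpow_of_exponent_ge h h1 (by linarith)
  · calc t / (1 + t) ≤ 1 := (div_le_one (by linarith)).2 (by linarith)
    _ = (1:ℝ) ^ (1 - θ) := (Real.one_rpow _).symm
    _ ≤ t ^ (1 - θ) := Real.rpow_le_rpow (by norm_num) h1.le (by linarith)

/-- Pointwise bound on the dissipation integrand. -/
lemma pointwise_dissipation_bound {r N ε θ : ℝ} (hr : 0 ≤ r) (hN : 0 ≤ N) (hε : 0 < ε)
    (hθ0 : 0 < θ) (hθ1 : θ < 1) :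
    ε * r / (1 + ε * r) * (N / r ^ 2) ≤ ε ^ (1 - θ) * (N / r ^ (1 + θ)) := by
  rcases eq_or_lt_of_le hr with h | h
  · simp [← h, Real.zero_rpow (by linarith : (1:ℝ) + θ ≠ 0)]
  have key : ε * r / (1 + ε * r) ≤ (ε * r) ^ (1 - θ) :=
    div_one_add_le_rpow (by positivity) hθ0 hθ1
  have step1 : ε * r / (1 + ε * r) * (N / r ^ 2) ≤ (ε * r) ^ (1 - θ) * (N / r ^ 2) :=
    mul_le_mul_of_nonneg_right key (by positivity)
  refine step1.trans_eq ?_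
  rw [Real.mul_rpow hε.le hr]
  have h2 : (r : ℝ) ^ 2 = r ^ ((2 : ℝ)) := by
    rw [← Real.rpow_natCast r 2]; norm_num
  rw [h2, mul_assoc]
  congr 1
  calc r ^ (1 - θ) * (N / r ^ ((2:ℝ))) = N * (r ^ (1 - θ) / r ^ ((2:ℝ))) := by ring
  _ = N * r ^ (1 - θ - 2) := by rw [← Real.rpow_sub h]
  _ = N / r ^ (1 + θ) := by
      rw [show (1 - θ - 2 : ℝ) = -(1 + θ) by ring, Real.rpow_neg hr, div_eq_mul_inv]

/-- Weighted entropy-dissipation estimate for mollified point masses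
(Lemma 4.1 of the paper): for a smooth nonnegative mollifier `ρ` supported in the ball
of radius `1/2` with `∫ρ = 1` and `C_θ := ∫ |∇ρ|²/ρ^{1+θ} < ∞`, one has
`∫ (ερ_σ/(1+ερ_σ))·|∇log ρ_σ|² ≤ C_θ ε^{1-θ} σ^{dθ-2}`. -/
theorem weighted_dissipation_estimate (d : ℕ) (θ : ℝ) (hθ : θ ∈ Set.Ioo (0:ℝ) 1)
    (ρ : EuclideanSpace ℝ (Fin d) → ℝ) (hsmooth : ContDiff ℝ (⊤ : ℕ∞) ρ)
    (hnonneg : ∀ x, 0 ≤ ρ x)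
    (hsupp : Function.support ρ ⊆ Metric.ball (0 : EuclideanSpace ℝ (Fin d)) (1/2))
    (hmass : ∫ x, ρ x = 1)
    (Cθ : ℝ)
    (hCθ : ∫ x, ‖gradient ρ x‖ ^ 2 / ρ x ^ (1 + θ) = Cθ)
    (hCθint : Integrable (fun x => ‖gradient ρ x‖ ^ 2 / ρ x ^ (1 + θ)))
    (ε σ : ℝ) (hε : 0 < ε) (hσ : σ ∈ Set.Ioo (0:ℝ) (1/2)) :
    ∫ x, (ε * mollifierRescaled d ρ σ x / (1 + ε * mollifierRescaled d ρ σ x))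
        * (‖gradient (mollifierRescaled d ρ σ) x‖ ^ 2 / (mollifierRescaled d ρ σ x) ^ 2)
      ≤ Cθ * ε ^ (1 - θ) * σ ^ ((d : ℝ) * θ - 2) := by
  obtain ⟨hθ0, hθ1⟩ := hθ
  obtain ⟨hσ0, hσ1⟩ := hσ
  have hσd : (0:ℝ) < σ ^ d := pow_pos hσ0 d
  have hdiff : Differentiable ℝ ρ := hsmooth.differentiable (by simp)
  set ρσ := mollifierRescaled d ρ σ with hρσ
  have hρσ_nonneg : ∀ x, 0 ≤ ρσ x := fun x =>
    mul_nonneg (inv_nonneg.2 hσd.le) (hnonneg _)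
  -- gradient of the rescaled mollifier
  have hgrad : ∀ x, ‖gradient ρσ x‖ = (σ ^ d)⁻¹ * σ⁻¹ * ‖gradient ρ (σ⁻¹ • x)‖ := by
    intro x
    have h1 : HasFDerivAt (fun y : EuclideanSpace ℝ (Fin d) => σ⁻¹ • y)
        (σ⁻¹ • ContinuousLinearMap.id ℝ (EuclideanSpace ℝ (Fin d))) x :=
      (hasFDerivAt_id x).const_smul σ⁻¹
    have h2 : HasFDerivAt (fun y => ρ (σ⁻¹ • y)) (σ⁻¹ • fderiv ℝ ρ (σ⁻¹ • x)) x := by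
      have h := ((hdiff (σ⁻¹ • x)).hasFDerivAt).comp x h1
      rw [show σ⁻¹ • fderiv ℝ ρ (σ⁻¹ • x) = (fderiv ℝ ρ (σ⁻¹ • x)).comp
          (σ⁻¹ • ContinuousLinearMap.id ℝ (EuclideanSpace ℝ (Fin d))) by
        ext v
        simp]
      exact h
    have h3 : HasFDerivAt ρσ ((σ ^ d)⁻¹ • σ⁻¹ • fderiv ℝ ρ (σ⁻¹ • x)) x := h2.const_mul _
    rw [norm_gradient_eq_norm_fderiv, h3.fderiv, norm_smul, norm_smul,
      norm_gradient_eq_norm_fderiv]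
    simp [abs_of_pos hσd, abs_of_pos hσ0, mul_assoc]
  -- the dominating function
  set K : ℝ := ε ^ (1 - θ) * (((σ ^ d)⁻¹ * σ⁻¹) ^ 2 / ((σ ^ d)⁻¹) ^ (1 + θ)) with hK
  set g : EuclideanSpace ℝ (Fin d) → ℝ := fun x => ‖gradient ρ x‖ ^ 2 / ρ x ^ (1 + θ) with hg
  have hGeq : ∀ x, ε ^ (1 - θ) * (‖gradient ρσ x‖ ^ 2 / ρσ x ^ (1 + θ))
      = K * g (σ⁻¹ • x) := by
    intro x
    have e1 : ‖gradient ρσ x‖ ^ 2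
        = ((σ ^ d)⁻¹ * σ⁻¹) ^ 2 * ‖gradient ρ (σ⁻¹ • x)‖ ^ 2 := by
      rw [hgrad x, mul_pow]
    have e2 : ρσ x ^ (1 + θ) = ((σ ^ d)⁻¹) ^ (1 + θ) * ρ (σ⁻¹ • x) ^ (1 + θ) :=
      Real.mul_rpow (inv_nonneg.2 hσd.le) (hnonneg _)
    rw [e1, e2, mul_div_mul_comm, hK, hg]
    ring
  have hGint : Integrable (fun x => K * g (σ⁻¹ • x)) :=
    (hCθint.comp_smul (inv_ne_zero hσ0.ne')).const_mul K
  -- pointwise bound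
  have hpt : ∀ x, (ε * ρσ x / (1 + ε * ρσ x)) * (‖gradient ρσ x‖ ^ 2 / (ρσ x) ^ 2)
      ≤ K * g (σ⁻¹ • x) := by
    intro x
    rw [← hGeq x]
    exact pointwise_dissipation_bound (hρσ_nonneg x) (by positivity) hε hθ0 hθ1
  have hmono : ∫ x, (ε * ρσ x / (1 + ε * ρσ x)) * (‖gradient ρσ x‖ ^ 2 / (ρσ x) ^ 2)
      ≤ ∫ x, K * g (σ⁻¹ • x) := by
    refine integral_mono_of_nonneg ?_ hGint ?_
    · refine Filter.Eventually.of_forall fun x => ?_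
      have h0 := hρσ_nonneg x
      have h1 : (0:ℝ) ≤ 1 + ε * ρσ x := by nlinarith
      exact mul_nonneg (div_nonneg (by positivity) h1)
        (div_nonneg (by positivity) (by positivity))
    · exact Filter.Eventually.of_forall hpt
  refine hmono.trans_eq ?_
  -- compute the integral of the dominating function
  have hfin : Module.finrank ℝ (EuclideanSpace ℝ (Fin d)) = d := finrank_euclideanSpace_fin
  have hint : ∫ x, g (σ⁻¹ • x) = σ ^ d * Cθ := by
    rw [MeasureTheory.Measure.integral_comp_inv_smul_of_nonneg volume g hσ0.le, hfin,
      smul_eq_mul]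
    rw [hg, hCθ]
  rw [integral_const_mul, hint]
  -- final power computation
  have e1 : (σ ^ d : ℝ)⁻¹ = σ ^ (-(d:ℝ)) := by
    rw [← Real.rpow_natCast σ d, ← Real.rpow_neg hσ0.le]
  have e2 : (σ:ℝ)⁻¹ = σ ^ (-1:ℝ) := by rw [Real.rpow_neg_one]
  have e3 : (σ ^ d : ℝ) = σ ^ ((d:ℝ)) := (Real.rpow_natCast σ d).symm
  have key : ((σ ^ d)⁻¹ * σ⁻¹) ^ 2 / ((σ ^ d)⁻¹) ^ (1 + θ) * σ ^ d
      = σ ^ ((d : ℝ) * θ - 2) := by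
    rw [e1, e2, e3, ← Real.rpow_add hσ0, ← Real.rpow_natCast (σ ^ (-(d:ℝ) + -1)) 2,
      ← Real.rpow_mul hσ0.le, ← Real.rpow_mul hσ0.le, ← Real.rpow_sub hσ0,
      ← Real.rpow_add hσ0]
    norm_num
    ring_nf
  rw [hK]
  calc ε ^ (1 - θ) * (((σ ^ d)⁻¹ * σ⁻¹) ^ 2 / ((σ ^ d)⁻¹) ^ (1 + θ)) * (σ ^ d * Cθ)
      = Cθ * ε ^ (1 - θ) * (((σ ^ d)⁻¹ * σ⁻¹) ^ 2 / ((σ ^ d)⁻¹) ^ (1 + θ) * σ ^ d) := by ring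
  _ = Cθ * ε ^ (1 - θ) * σ ^ ((d : ℝ) * θ - 2) := by rw [key]
end

section
/- For every K > 0 there is a constant C_K < ∞ such that for all finite nonnegative Borel measures ξ, ξ' on the d-dimensional torus, the measures Θ_K(ξ) := Θ_K(v)dx + (K/3)·ξ^⊥ (where ξ = v·dx + ξ^⊥ is the Lebesgue decomposition and Θ_K(ρ) = ρ²[1-(1+2K/(3ρ))e^{-K/ρ}]) satisfy ⟨1, Θ_K(ξ)⟩ ≤ C_K ⟨1, ξ⟩ and ‖Θ_K(ξ) - Θ_K(ξ')‖_{TV} ≤ C_K ‖ξ - ξ'‖_{TV}. -/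
open MeasureTheory Real

/-- The `d`-dimensional torus. -/
abbrev Torus (d : ℕ) := Fin d → AddCircle (1 : ℝ)

/-- The truncated mobility `Θ_K(ρ) = ρ²[1-(1+2K/(3ρ))e^{-K/ρ}]`. -/
noncomputable def ThetaKfun (K ρ : ℝ) : ℝ :=
  ρ ^ 2 * (1 - (1 + 2 * K / (3 * ρ)) * Real.exp (-K / ρ))

/-- The extension of `Θ_K` to measures: apply `Θ_K` to the absolutely continuous part
and multiply the singular part by the asymptotic slope `K/3`. -/
noncomputable def ThetaKmeas (d : ℕ) (K : ℝ) (ξ : Measure (Torus d)) : Measure (Torus d) :=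
  volume.withDensity (fun x => ENNReal.ofReal (ThetaKfun K ((ξ.rnDeriv volume x).toReal)))
    + ENNReal.ofReal (K / 3) • ξ.singularPart volume

/-- Total variation distance between two (nonnegative) measures. -/
noncomputable def tvDist {X : Type*} [MeasurableSpace X] (μ ν : Measure X) : ENNReal :=
  (μ - ν) Set.univ + (ν - μ) Set.univ

/-! `Θ_K` vanishes at `0` and is `3K`-Lipschitz on `[0, ∞)` (its derivative is bounded by `3K`),
and the singular slope `K/3` is at most `6K`. The singular parts of `ξ` and `ξ'` both live on one
Lebesgue-null set, off which their absolutely continuous parts live, so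
`‖ξ - ξ'‖_TV = ‖v - v'‖_{L¹} + ‖ξ^⊥ - ξ'^⊥‖_TV`. Comparing `Θ_K(ξ)` and `Θ_K(ξ')` piece by piece
then gives the Lipschitz bound with `C = 6K`, and the growth bound is its case `ξ' = 0`. -/

open Set
open scoped ENNReal NNReal

lemma ThetaKfun_zero (K : ℝ) : ThetaKfun K 0 = 0 := by simp [ThetaKfun]

section ThetaK

variable {K : ℝ}

lemma ThetaKfun_nonneg (hK : 0 < K) {ρ : ℝ} (hρ : 0 ≤ ρ) : 0 ≤ ThetaKfun K ρ := by
  rcases hρ.eq_or_lt with rfl | hρ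
  · rw [ThetaKfun_zero]
  have hexp : (1 + 2 * K / (3 * ρ)) * exp (-K / ρ) ≤ 1 := by
    rw [neg_div, exp_neg, ← div_eq_mul_inv, div_le_one (exp_pos _)]
    have : 2 * K / (3 * ρ) ≤ K / ρ := by
      rw [div_le_div_iff₀ (by positivity) hρ]; nlinarith
    linarith [add_one_le_exp (K / ρ)]
  unfold ThetaKfun
  exact mul_nonneg (sq_nonneg ρ) (by linarith)

lemma ThetaKfun_le_mul (hK : 0 < K) {ρ : ℝ} (hρ : 0 ≤ ρ) : ThetaKfun K ρ ≤ K * ρ := by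
  rcases hρ.eq_or_lt with rfl | hρ
  · simp [ThetaKfun_zero]
  have hexp : 1 - (1 + 2 * K / (3 * ρ)) * exp (-K / ρ) ≤ K / ρ := by
    have : 0 ≤ 2 * K / (3 * ρ) * exp (-K / ρ) := by positivity
    linarith [add_one_le_exp (-K / ρ), neg_div ρ K]
  calc ThetaKfun K ρ ≤ ρ ^ 2 * (K / ρ) := mul_le_mul_of_nonneg_left hexp (sq_nonneg ρ)
    _ = K * ρ := by field_simp

lemma hasDerivAt_ThetaKfun {x : ℝ} (hx : 0 < x) :
    HasDerivAt (ThetaKfun K)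
      (2 * x * (1 - exp (-K / x)) - (5 * K / 3 + 2 * K ^ 2 / (3 * x)) * exp (-K / x)) x := by
  have hx0 : x ≠ 0 := hx.ne'
  have h := (hasDerivAt_pow 2 x).fun_mul ((((hasDerivAt_const x 1).fun_add
    ((hasDerivAt_const x (2 * K)).fun_div ((hasDerivAt_id' x).const_mul 3) (by positivity))).fun_mul
    ((hasDerivAt_const x (-K)).fun_div (hasDerivAt_id' x) hx0).exp).const_sub 1)
  refine h.congr_deriv ?_
  field_simp
  ring

lemma abs_deriv_ThetaKfun_le (hK : 0 < K) {x : ℝ} (hx : 0 < x) :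
    |2 * x * (1 - exp (-K / x)) - (5 * K / 3 + 2 * K ^ 2 / (3 * x)) * exp (-K / x)|
      ≤ 3 * K := by
  set t := K / x with ht
  have htpos : 0 < t := by positivity
  have hK2 : 2 * K ^ 2 / (3 * x) = 2 * K / 3 * t := by rw [ht]; field_simp
  have hxt : x * t = K := by rw [ht]; field_simp
  rw [neg_div, ← ht, hK2]
  have he1 : exp (-t) ≤ 1 := exp_le_one_iff.2 (by linarith)
  have he2 : 1 - exp (-t) ≤ t := by linarith [add_one_le_exp (-t)]
  have he3 : t * exp (-t) ≤ 1 := by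
    rw [exp_neg, ← div_eq_mul_inv, div_le_one (exp_pos t)]
    linarith [add_one_le_exp t]
  have hgrowth : 0 ≤ 2 * x * (1 - exp (-t)) ∧ 2 * x * (1 - exp (-t)) ≤ 2 * K := by
    constructor <;> nlinarith
  have hdecay : 0 ≤ (5 * K / 3 + 2 * K / 3 * t) * exp (-t) ∧
      (5 * K / 3 + 2 * K / 3 * t) * exp (-t) ≤ 7 * K / 3 := by
    constructor
    · positivity
    · nlinarith
  rw [abs_le]
  constructor <;> linarith [hgrowth.1, hgrowth.2, hdecay.1, hdecay.2]

lemma lipschitzOnWith_ThetaKfun (hK : 0 < K) :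
    LipschitzOnWith (Real.toNNReal (3 * K)) (ThetaKfun K) (Ici 0) := by
  have hpos : LipschitzOnWith (Real.toNNReal (3 * K)) (ThetaKfun K) (Ioi 0) := by
    refine (convex_Ioi 0).lipschitzOnWith_of_nnnorm_hasDerivWithin_le
      (fun x hx => (hasDerivAt_ThetaKfun hx).hasDerivWithinAt) fun x hx => ?_
    rw [← NNReal.coe_le_coe, coe_nnnorm, Real.coe_toNNReal _ (by positivity)]
    exact abs_deriv_ThetaKfun_le hK hx
  have hzero : ∀ b : ℝ, 0 ≤ b → dist (ThetaKfun K b) (ThetaKfun K 0) ≤ 3 * K * dist b 0 := by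
    intro b hb
    rw [ThetaKfun_zero, Real.dist_eq, Real.dist_eq, sub_zero, sub_zero,
      abs_of_nonneg (ThetaKfun_nonneg hK hb), abs_of_nonneg hb]
    nlinarith [ThetaKfun_le_mul hK hb]
  refine LipschitzOnWith.of_dist_le_mul fun a ha b hb => ?_
  rw [Real.coe_toNNReal _ (by positivity)]
  rcases (show (0 : ℝ) ≤ a from ha).eq_or_lt with rfl | ha
  · rw [dist_comm, dist_comm 0]; exact hzero b hb
  rcases (show (0 : ℝ) ≤ b from hb).eq_or_lt with rfl | hb
  · exact hzero a ha.le
  simpa [Real.coe_toNNReal _ (by positivity : 0 ≤ 3 * K)] using hpos.dist_le_mul a ha b hb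

end ThetaK

lemma ENNReal.ofReal_abs_toReal_sub_toReal {a b : ℝ≥0∞} (ha : a ≠ ∞) (hb : b ≠ ∞) :
    ENNReal.ofReal |a.toReal - b.toReal| = (a - b) + (b - a) := by
  rcases le_total a b with h | h
  · rw [abs_of_nonpos (sub_nonpos.2 (ENNReal.toReal_mono hb h)), neg_sub,
      ← ENNReal.toReal_sub_of_le h hb, ENNReal.ofReal_toReal (ENNReal.sub_ne_top hb),
      tsub_eq_zero_of_le h, zero_add]
  · rw [abs_of_nonneg (sub_nonneg.2 (ENNReal.toReal_mono ha h)),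
      ← ENNReal.toReal_sub_of_le h ha, ENNReal.ofReal_toReal (ENNReal.sub_ne_top ha),
      tsub_eq_zero_of_le h, add_zero]

lemma LipschitzOnWith.ofReal_comp_toReal_le {f : ℝ → ℝ} {L : ℝ≥0}
    (hf : LipschitzOnWith L f (Ici 0)) {a b : ℝ≥0∞} (ha : a ≠ ∞) (hb : b ≠ ∞) :
    ENNReal.ofReal (f a.toReal) ≤ L * ((a - b) + (b - a)) + ENNReal.ofReal (f b.toReal) := by
  have hdist := hf.dist_le_mul a.toReal ENNReal.toReal_nonneg b.toReal ENNReal.toReal_nonneg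
  rw [Real.dist_eq, Real.dist_eq] at hdist
  have hle : f a.toReal ≤ L * |a.toReal - b.toReal| + f b.toReal := by
    linarith [le_abs_self (f a.toReal - f b.toReal)]
  calc ENNReal.ofReal (f a.toReal)
      ≤ ENNReal.ofReal (L * |a.toReal - b.toReal| + f b.toReal) := ENNReal.ofReal_le_ofReal hle
    _ ≤ ENNReal.ofReal (L * |a.toReal - b.toReal|) + ENNReal.ofReal (f b.toReal) :=
      ENNReal.ofReal_add_le
    _ = L * ((a - b) + (b - a)) + ENNReal.ofReal (f b.toReal) := by
      rw [ENNReal.ofReal_mul L.coe_nonneg, ENNReal.ofReal_coe_nnreal,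
        ENNReal.ofReal_abs_toReal_sub_toReal ha hb]

lemma tvDist_zero_right {X : Type*} [MeasurableSpace X] (μ : Measure X) :
    tvDist μ 0 = μ univ := by
  simp [tvDist, Measure.sub_zero, Measure.zero_sub]

namespace MeasureTheory.Measure

variable {X : Type*} [MeasurableSpace X] {m μ ν : Measure X} {T : Set X}

lemma restrict_eq_withDensity_rnDeriv [HaveLebesgueDecomposition μ m]
    (hm : m Tᶜ = 0) (hs : μ.singularPart m T = 0) :
    μ.restrict T = m.withDensity (μ.rnDeriv m) := by
  conv_lhs => rw [← rnDeriv_add_singularPart μ m]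
  rw [restrict_add, restrict_eq_zero.2 hs, add_zero,
    restrict_eq_self_of_ae_mem (ae_iff.2 (withDensity_absolutelyContinuous m _ hm))]

lemma restrict_compl_eq_singularPart [HaveLebesgueDecomposition μ m]
    (hm : m Tᶜ = 0) (hs : μ.singularPart m T = 0) :
    μ.restrict Tᶜ = μ.singularPart m := by
  conv_lhs => rw [← rnDeriv_add_singularPart μ m]
  rw [restrict_add, restrict_eq_zero.2 (withDensity_absolutelyContinuous m _ hm), zero_add]
  exact restrict_eq_self_of_ae_mem (measure_eq_zero_iff_ae_notMem.1 hs)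

lemma sub_eq_withDensity_add_singularPart_sub [SigmaFinite m] [IsFiniteMeasure μ]
    [IsFiniteMeasure ν] :
    μ - ν = m.withDensity (μ.rnDeriv m - ν.rnDeriv m) + (μ.singularPart m - ν.singularPart m) := by
  have hsing := (μ.mutuallySingular_singularPart m).add_left (ν.mutuallySingular_singularPart m)
  set T := hsing.nullSet
  have hT : MeasurableSet T := hsing.measurableSet_nullSet
  have hm : m Tᶜ = 0 := hsing.measure_compl_nullSet
  obtain ⟨hμ, hν⟩ := add_eq_zero.1 hsing.measure_nullSet
  have : IsFiniteMeasure (m.withDensity (ν.rnDeriv m)) :=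
    isFiniteMeasure_of_le ν (withDensity_rnDeriv_le ν m)
  calc μ - ν = (μ - ν).restrict T + (μ - ν).restrict Tᶜ := (restrict_add_restrict_compl hT).symm
    _ = (μ.restrict T - ν.restrict T) + (μ.restrict Tᶜ - ν.restrict Tᶜ) := by
      rw [restrict_sub_eq_restrict_sub_restrict hT,
        restrict_sub_eq_restrict_sub_restrict hT.compl]
    _ = _ := by
      rw [restrict_eq_withDensity_rnDeriv hm hμ, restrict_eq_withDensity_rnDeriv hm hν,
        restrict_compl_eq_singularPart hm hμ, restrict_compl_eq_singularPart hm hν,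
        withDensity_sub (measurable_rnDeriv μ m) (measurable_rnDeriv ν m)]

end MeasureTheory.Measure

lemma tvDist_eq_lintegral_add_tvDist_singularPart {X : Type*} [MeasurableSpace X]
    (m : Measure X) [SigmaFinite m] (μ ν : Measure X) [IsFiniteMeasure μ] [IsFiniteMeasure ν] :
    tvDist μ ν = ∫⁻ x, ((μ.rnDeriv m x - ν.rnDeriv m x) + (ν.rnDeriv m x - μ.rnDeriv m x)) ∂m
      + tvDist (μ.singularPart m) (ν.singularPart m) := by
  have hμ := μ.measurable_rnDeriv m
  have hν := ν.measurable_rnDeriv m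
  rw [tvDist, tvDist, Measure.sub_eq_withDensity_add_singularPart_sub (m := m),
    Measure.sub_eq_withDensity_add_singularPart_sub (m := m) (μ := ν), Measure.add_apply,
    Measure.add_apply, withDensity_apply _ MeasurableSet.univ,
    withDensity_apply _ MeasurableSet.univ, Measure.restrict_univ,
    lintegral_add_left (f := fun x => μ.rnDeriv m x - ν.rnDeriv m x) (hμ.sub hν)]
  simp only [Pi.sub_apply]
  ring

noncomputable def densityMap {X : Type*} [MeasurableSpace X] (m : Measure X) (f : ℝ → ℝ)
    (c : ℝ≥0∞) (μ : Measure X) : Measure X :=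
  m.withDensity (fun x => ENNReal.ofReal (f (μ.rnDeriv m x).toReal)) + c • μ.singularPart m

section densityMap

variable {X : Type*} [MeasurableSpace X] {m : Measure X} {f : ℝ → ℝ} {c : ℝ≥0∞} {L : ℝ≥0}

lemma densityMap_zero (hf : f 0 = 0) : densityMap m f c 0 = 0 := by
  have hdensity : (fun x => ENNReal.ofReal (f ((0 : Measure X).rnDeriv m x).toReal)) =ᵐ[m] 0 :=
    (Measure.rnDeriv_zero m).mono fun x hx => by simp [hx, hf]
  rw [densityMap, Measure.singularPart_zero, smul_zero, add_zero, withDensity_congr_ae hdensity,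
    withDensity_zero]

lemma densityMap_le_add (hf : LipschitzOnWith L f (Ici 0)) (μ ν : Measure X)
    [IsFiniteMeasure μ] [IsFiniteMeasure ν] :
    densityMap m f c μ ≤ m.withDensity (fun x => L * ((μ.rnDeriv m x - ν.rnDeriv m x)
        + (ν.rnDeriv m x - μ.rnDeriv m x))) + c • (μ.singularPart m - ν.singularPart m)
      + densityMap m f c ν := by
  have hac : m.withDensity (fun x => ENNReal.ofReal (f (μ.rnDeriv m x).toReal))
      ≤ m.withDensity (fun x => L * ((μ.rnDeriv m x - ν.rnDeriv m x)
        + (ν.rnDeriv m x - μ.rnDeriv m x)))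
        + m.withDensity (fun x => ENNReal.ofReal (f (ν.rnDeriv m x).toReal)) := by
    rw [← withDensity_add_left (by fun_prop)]
    refine withDensity_mono ?_
    filter_upwards [μ.rnDeriv_lt_top m, ν.rnDeriv_lt_top m] with x hμx hνx
    exact hf.ofReal_comp_toReal_le hμx.ne hνx.ne
  have hsing : c • μ.singularPart m ≤ c • (μ.singularPart m - ν.singularPart m)
      + c • ν.singularPart m := by
    rw [← smul_add]
    gcongr
    exact Measure.sub_le_iff_le_add.1 le_rfl
  calc densityMap m f c μ ≤ _ := add_le_add hac hsing
    _ = _ := by rw [densityMap]; abel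

lemma densityMap_sub_apply_univ_le (hf : LipschitzOnWith L f (Ici 0)) (μ ν : Measure X)
    [IsFiniteMeasure μ] [IsFiniteMeasure ν] :
    (densityMap m f c μ - densityMap m f c ν) univ
      ≤ L * ∫⁻ x, ((μ.rnDeriv m x - ν.rnDeriv m x) + (ν.rnDeriv m x - μ.rnDeriv m x)) ∂m
        + c * (μ.singularPart m - ν.singularPart m) univ := by
  have hμ := μ.measurable_rnDeriv m
  have hν := ν.measurable_rnDeriv m
  calc (densityMap m f c μ - densityMap m f c ν) univ
      ≤ (m.withDensity (fun x => L * ((μ.rnDeriv m x - ν.rnDeriv m x)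
          + (ν.rnDeriv m x - μ.rnDeriv m x))) + c • (μ.singularPart m - ν.singularPart m)) univ :=
        Measure.sub_le_of_le_add (densityMap_le_add hf μ ν) univ
    _ = _ := by
      rw [Measure.add_apply, withDensity_apply _ MeasurableSet.univ, Measure.restrict_univ,
        lintegral_const_mul (f := fun x => (μ.rnDeriv m x - ν.rnDeriv m x)
          + (ν.rnDeriv m x - μ.rnDeriv m x)) _ ((hμ.sub hν).add (hν.sub hμ)),
        Measure.smul_apply, smul_eq_mul]

lemma tvDist_densityMap_le [SigmaFinite m] (hf : LipschitzOnWith L f (Ici 0)) (hc : c ≤ 2 * L)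
    (μ ν : Measure X) [IsFiniteMeasure μ] [IsFiniteMeasure ν] :
    tvDist (densityMap m f c μ) (densityMap m f c ν) ≤ 2 * L * tvDist μ ν := by
  set I := ∫⁻ x, ((μ.rnDeriv m x - ν.rnDeriv m x) + (ν.rnDeriv m x - μ.rnDeriv m x)) ∂m
  have hI : ∫⁻ x, ((ν.rnDeriv m x - μ.rnDeriv m x) + (μ.rnDeriv m x - ν.rnDeriv m x)) ∂m = I :=
    lintegral_congr fun x => add_comm _ _
  set P := (μ.singularPart m - ν.singularPart m) univ
  set Q := (ν.singularPart m - μ.singularPart m) univ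
  calc tvDist (densityMap m f c μ) (densityMap m f c ν)
      ≤ (L * I + c * P) + (L * ∫⁻ x, ((ν.rnDeriv m x - μ.rnDeriv m x)
          + (μ.rnDeriv m x - ν.rnDeriv m x)) ∂m + c * Q) :=
        add_le_add (densityMap_sub_apply_univ_le hf μ ν) (densityMap_sub_apply_univ_le hf ν μ)
    _ = 2 * L * I + c * (P + Q) := by rw [hI]; ring
    _ ≤ 2 * L * I + 2 * L * (P + Q) := by gcongr
    _ = 2 * L * tvDist μ ν := by
      rw [tvDist_eq_lintegral_add_tvDist_singularPart m μ ν, tvDist]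
      ring

end densityMap

lemma ThetaKmeas_eq_densityMap (d : ℕ) (K : ℝ) :
    ThetaKmeas d K = densityMap volume (ThetaKfun K) (ENNReal.ofReal (K / 3)) := rfl

/-- Growth and Lipschitz continuity of `Θ_K` on measures: there is `C_K < ∞` with
`⟨1, Θ_K(ξ)⟩ ≤ C_K ⟨1, ξ⟩` and `‖Θ_K(ξ) - Θ_K(ξ')‖_TV ≤ C_K ‖ξ - ξ'‖_TV` for all
finite nonnegative Borel measures `ξ, ξ'` on the torus. -/
theorem ThetaK_measure_growth_lipschitz (d : ℕ) (K : ℝ) (hK : 0 < K) :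
    ∃ C : ℝ, 0 ≤ C ∧ ∀ ξ ξ' : Measure (Torus d),
      IsFiniteMeasure ξ → IsFiniteMeasure ξ' →
        ThetaKmeas d K ξ Set.univ ≤ ENNReal.ofReal C * ξ Set.univ ∧
        tvDist (ThetaKmeas d K ξ) (ThetaKmeas d K ξ')
          ≤ ENNReal.ofReal C * tvDist ξ ξ' := by
  have hC : ENNReal.ofReal (6 * K) = 2 * (Real.toNNReal (3 * K) : ℝ≥0∞) := by
    change _ = 2 * ENNReal.ofReal (3 * K)
    rw [← ENNReal.ofReal_ofNat 2, ← ENNReal.ofReal_mul (by norm_num)]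
    ring_nf
  have hc : ENNReal.ofReal (K / 3) ≤ 2 * (Real.toNNReal (3 * K) : ℝ≥0∞) := by
    rw [← hC]; exact ENNReal.ofReal_le_ofReal (by linarith)
  have hlip : ∀ ξ ξ' : Measure (Torus d), IsFiniteMeasure ξ → IsFiniteMeasure ξ' →
      tvDist (ThetaKmeas d K ξ) (ThetaKmeas d K ξ') ≤ ENNReal.ofReal (6 * K) * tvDist ξ ξ' := by
    intro ξ ξ' _ _
    rw [hC, ThetaKmeas_eq_densityMap]
    exact tvDist_densityMap_le (lipschitzOnWith_ThetaKfun hK) hc ξ ξ'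
  refine ⟨6 * K, by positivity, fun ξ ξ' hξ hξ' => ⟨?_, hlip ξ ξ' hξ hξ'⟩⟩
  simpa [tvDist_zero_right, ThetaKmeas_eq_densityMap, densityMap_zero (ThetaKfun_zero K)]
    using hlip ξ 0 hξ inferInstance
end
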